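/- arXiv:2208.06290 — 3 statements merged into one kernel-verified Lean document; each statement's English description precedes it below -/
import Mathlib

section
/- Let A_α, A_β be invertible matrices, U_α, V_α, U_β, V_β matrices of compatible sizes, Y_α = A_α^{-1} U_α, Y_β = A_β^{-1} U_β, z_α = A_α^{-1} b_α, z_β = A_β^{-1} b_β. If the 2×2 block matrix M = [[V_α* Y_α, I],[I, V_β* Y_β]] is invertible and (w_α, w_β) solves M (w_α; w_β) = (V_α* z_α; V_β* z_β), then x_α = z_α − Y_α w_α and x_β = z_β − Y_β w_β satisfy A_α x_α + U_α V_β* x_β = b_α and U_β V_α* x_α + A_β x_β = b_β. -/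
open Matrix

theorem hodlr_recursion_correct
    {n₁ n₂ r : ℕ}
    (Aα : Matrix (Fin n₁) (Fin n₁) ℂ) (Aβ : Matrix (Fin n₂) (Fin n₂) ℂ)
    (Uα Vα : Matrix (Fin n₁) (Fin r) ℂ) (Uβ Vβ : Matrix (Fin n₂) (Fin r) ℂ)
    (bα : Fin n₁ → ℂ) (bβ : Fin n₂ → ℂ)
    (hAα : IsUnit Aα) (hAβ : IsUnit Aβ)
    (Yα : Matrix (Fin n₁) (Fin r) ℂ) (hYα : Yα = Aα⁻¹ * Uα)
    (Yβ : Matrix (Fin n₂) (Fin r) ℂ) (hYβ : Yβ = Aβ⁻¹ * Uβ)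
    (zα : Fin n₁ → ℂ) (hzα : zα = Aα⁻¹.mulVec bα)
    (zβ : Fin n₂ → ℂ) (hzβ : zβ = Aβ⁻¹.mulVec bβ)
    (M : Matrix (Fin r ⊕ Fin r) (Fin r ⊕ Fin r) ℂ)
    (hM : M = fromBlocks (Vαᴴ * Yα) 1 1 (Vβᴴ * Yβ))
    (hMinv : IsUnit M)
    (wα wβ : Fin r → ℂ)
    (hw : M.mulVec (Sum.elim wα wβ) = Sum.elim (Vαᴴ.mulVec zα) (Vβᴴ.mulVec zβ))
    (xα : Fin n₁ → ℂ) (hxα : xα = zα - Yα.mulVec wα)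
    (xβ : Fin n₂ → ℂ) (hxβ : xβ = zβ - Yβ.mulVec wβ) :
    Aα.mulVec xα + (Uα * Vβᴴ).mulVec xβ = bα ∧
    (Uβ * Vαᴴ).mulVec xα + Aβ.mulVec xβ = bβ := by
  subst hM hYα hYβ hzα hzβ hxα hxβ
  have hAαi : Aα * Aα⁻¹ = 1 := Matrix.mul_nonsing_inv _ ((Matrix.isUnit_iff_isUnit_det _).mp hAα)
  have hAβi : Aβ * Aβ⁻¹ = 1 := Matrix.mul_nonsing_inv _ ((Matrix.isUnit_iff_isUnit_det _).mp hAβ)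
  rw [fromBlocks_mulVec] at hw
  have h1 : (Vαᴴ * (Aα⁻¹ * Uα)).mulVec wα + (1 : Matrix (Fin r) (Fin r) ℂ).mulVec wβ
      = Vαᴴ.mulVec (Aα⁻¹.mulVec bα) := funext fun i => congrFun hw (Sum.inl i)
  have h2 : (1 : Matrix (Fin r) (Fin r) ℂ).mulVec wα + (Vβᴴ * (Aβ⁻¹ * Uβ)).mulVec wβ
      = Vβᴴ.mulVec (Aβ⁻¹.mulVec bβ) := funext fun i => congrFun hw (Sum.inr i)
  simp only [Matrix.one_mulVec, Matrix.mulVec_mulVec] at h1 h2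
  constructor
  · simp only [Matrix.mulVec_sub, Matrix.mulVec_mulVec, ← Matrix.mul_assoc, hAαi,
      Matrix.one_mul]
    have h2' : (Uα * Vαᴴ * Aα⁻¹ * Uα).mulVec 0 = 0 := by simp
    have := congrArg (fun v => Uα.mulVec v) h2
    simp only [Matrix.mulVec_add, Matrix.mulVec_mulVec, ← Matrix.mul_assoc] at this
    rw [← this]
    simp only [Matrix.one_mulVec, neg_one_smul]
    abel
  · simp only [Matrix.mulVec_sub, Matrix.mulVec_mulVec, ← Matrix.mul_assoc, hAβi,
      Matrix.one_mul]
    have := congrArg (fun v => Uβ.mulVec v) h1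
    simp only [Matrix.mulVec_add, Matrix.mulVec_mulVec, ← Matrix.mul_assoc] at this
    rw [← this]
    simp only [Matrix.one_mulVec, neg_one_smul]
    abel
end

section
/- Let Y_α ∈ 𝔽^{n₁×r}, V_α ∈ 𝔽^{n₁×r}, Y_β ∈ 𝔽^{n₂×r}, V_β ∈ 𝔽^{n₂×r}. If the block matrix B = [[I, Y_α V_β*],[Y_β V_α*, I]] is invertible and the matrix K = [[I, V_α* Y_α],[V_β* Y_β, I]] is invertible, then B^{-1} = I − [[0, Y_α],[Y_β, 0]] · K^{-1} · [[V_α*, 0],[0, V_β*]]. -/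
open Matrix

theorem hodlr_woodbury_block_inverse
    {n₁ n₂ r : ℕ}
    (Yα Vα : Matrix (Fin n₁) (Fin r) ℂ) (Yβ Vβ : Matrix (Fin n₂) (Fin r) ℂ)
    (B : Matrix (Fin n₁ ⊕ Fin n₂) (Fin n₁ ⊕ Fin n₂) ℂ)
    (hB : B = fromBlocks 1 (Yα * Vβᴴ) (Yβ * Vαᴴ) 1)
    (K : Matrix (Fin r ⊕ Fin r) (Fin r ⊕ Fin r) ℂ)
    (hK : K = fromBlocks 1 (Vαᴴ * Yα) (Vβᴴ * Yβ) 1)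
    (hBinv : IsUnit B) (hKinv : IsUnit K) :
    B⁻¹ = 1 - fromBlocks 0 Yα Yβ 0 * K⁻¹ * fromBlocks Vαᴴ 0 0 Vβᴴ := by
  set U : Matrix (Fin n₁ ⊕ Fin n₂) (Fin r ⊕ Fin r) ℂ := fromBlocks 0 Yα Yβ 0 with hU
  set W : Matrix (Fin r ⊕ Fin r) (Fin n₁ ⊕ Fin n₂) ℂ := fromBlocks Vαᴴ 0 0 Vβᴴ with hW
  have hB' : B = 1 + U * W := by
    rw [hB, hU, hW, fromBlocks_multiply]
    ext i j
    cases i <;> cases j <;> simp [fromBlocks, Matrix.one_apply]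
  have hK' : K = 1 + W * U := by
    rw [hK, hU, hW, fromBlocks_multiply]
    ext i j
    cases i <;> cases j <;> simp [fromBlocks, Matrix.one_apply]
  have hK1 : K * K⁻¹ = 1 := mul_nonsing_inv K ((Matrix.isUnit_iff_isUnit_det K).mp hKinv)
  apply inv_eq_right_inv
  have expand : (1 + U * W) * (1 - U * K⁻¹ * W) = 1 + U * W - U * ((1 + W * U) * K⁻¹) * W := by
    simp only [Matrix.mul_add, Matrix.add_mul, Matrix.mul_sub, Matrix.sub_mul, Matrix.mul_one, Matrix.one_mul, Matrix.mul_assoc]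
  rw [hB', expand, ← hK', hK1, Matrix.mul_one]
  exact add_sub_cancel_right 1 (U * W)
end

section
/- Let A_α, A_β be invertible. The 2×2 block matrix A = [[A_α, U_α V_β*],[U_β V_α*, A_β]] is invertible if and only if K = [[V_α* Y_α, I_r],[I_r, V_β* Y_β]] is invertible, where Y_α = A_α^{-1} U_α and Y_β = A_β^{-1} U_β. -/
open Matrix

theorem hodlr_invertibility_criterion
    {n₁ n₂ r : ℕ}
    (Aα : Matrix (Fin n₁) (Fin n₁) ℂ) (Aβ : Matrix (Fin n₂) (Fin n₂) ℂ)
    (Uα Vα : Matrix (Fin n₁) (Fin r) ℂ) (Uβ Vβ : Matrix (Fin n₂) (Fin r) ℂ)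
    (hAα : IsUnit Aα) (hAβ : IsUnit Aβ)
    (Yα : Matrix (Fin n₁) (Fin r) ℂ) (hYα : Yα = Aα⁻¹ * Uα)
    (Yβ : Matrix (Fin n₂) (Fin r) ℂ) (hYβ : Yβ = Aβ⁻¹ * Uβ) :
    IsUnit (fromBlocks Aα (Uα * Vβᴴ) (Uβ * Vαᴴ) Aβ) ↔
      IsUnit (fromBlocks (Vαᴴ * Yα) (1 : Matrix (Fin r) (Fin r) ℂ) 1 (Vβᴴ * Yβ)) := by
  haveI : Invertible Aα := hAα.invertible
  haveI : Invertible Aβ := hAβ.invertible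
  have hdα : IsUnit Aα.det := (Matrix.isUnit_iff_isUnit_det _).mp hAα
  have hdβ : IsUnit Aβ.det := (Matrix.isUnit_iff_isUnit_det _).mp hAβ
  set P : Matrix (Fin r) (Fin r) ℂ := Vαᴴ * Yα with hP
  set Q : Matrix (Fin r) (Fin r) ℂ := Vβᴴ * Yβ with hQ
  -- determinant of big matrix
  have hA : (fromBlocks Aα (Uα * Vβᴴ) (Uβ * Vαᴴ) Aβ).det
      = Aα.det * (Aβ.det * (1 - Q * P).det) := by
    rw [det_fromBlocks₁₁]
    congr 1
    have key : Aβ - Uβ * Vαᴴ * ⅟Aα * (Uα * Vβᴴ)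
        = Aβ * (1 - Yβ * (Vαᴴ * (Yα * Vβᴴ))) := by
      rw [invOf_eq_nonsing_inv, hYα, hYβ, Matrix.mul_sub, Matrix.mul_one]
      congr 1
      rw [Matrix.mul_assoc Aβ⁻¹, Matrix.mul_nonsing_inv_cancel_left _ _ hdβ]
      simp [Matrix.mul_assoc]
    rw [key, det_mul]
    congr 1
    rw [det_one_sub_mul_comm]
    have hM : Vαᴴ * (Yα * Vβᴴ) * Yβ = P * Q := by simp [hP, hQ, Matrix.mul_assoc]
    rw [hM, det_one_sub_mul_comm]
  -- determinant of K
  set J : Matrix (Fin r ⊕ Fin r) (Fin r ⊕ Fin r) ℂ := fromBlocks 0 1 1 0 with hJdef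
  have hmul : J * J = 1 := by
    rw [hJdef, Matrix.fromBlocks_multiply, ← Matrix.fromBlocks_one]
    simp
  have hJ : IsUnit J := ⟨⟨J, J, hmul, hmul⟩, rfl⟩
  have hdJ : IsUnit J.det := (Matrix.isUnit_iff_isUnit_det _).mp hJ
  have hK : (fromBlocks P (1 : Matrix (Fin r) (Fin r) ℂ) 1 Q).det * J.det
      = (1 - Q * P).det := by
    rw [← det_mul]
    have hKJ : (fromBlocks P (1 : Matrix (Fin r) (Fin r) ℂ) 1 Q) * J
        = fromBlocks 1 P Q 1 := by
      rw [hJdef, Matrix.fromBlocks_multiply]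
      simp
    rw [hKJ, det_fromBlocks_one₁₁]
  rw [Matrix.isUnit_iff_isUnit_det, Matrix.isUnit_iff_isUnit_det, hA]
  constructor
  · intro h
    have h1 : IsUnit (1 - Q * P).det :=
      isUnit_of_mul_isUnit_right (isUnit_of_mul_isUnit_right h)
    have h2 : IsUnit ((fromBlocks P (1 : Matrix (Fin r) (Fin r) ℂ) 1 Q).det * J.det) :=
      hK ▸ h1
    exact isUnit_of_mul_isUnit_left h2
  · intro h
    have h1 : IsUnit (1 - Q * P).det := hK ▸ h.mul hdJ
    exact hdα.mul (hdβ.mul h1)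
end
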